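/- In the Edge and Capacity Manipulation Setting, M_AP is truthful: for every MVbM instance with true edge profile (T_1,…,T_n) and true capacities (b_1,…,b_n), every agent a_i, every nonempty S_i ⊆ T_i, and every 1 ≤ c_i ≤ b_i, the utility of a_i when it reports (S_i, c_i) and all other agents' reports are fixed is at most its utility when it reports (T_i, b_i) with the same other reports. -/

import Mathlib

abbrev Matching (n m : ℕ) := Fin m → Option (Fin n)

def load {n m : ℕ} (μ : Matching n m) (i : Fin n) : ℕ :=
  (Finset.univ.filter fun j => μ j = some i).card

def assignedSet {n m : ℕ} (μ : Matching n m) (i : Fin n) : Finset (Fin m) :=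
  Finset.univ.filter fun j => μ j = some i

def IsBMatching {n m : ℕ} (b : Fin n → ℕ) (E : Fin n → Finset (Fin m))
    (μ : Matching n m) : Prop :=
  (∀ j i, μ j = some i → j ∈ E i) ∧ ∀ i, load μ i ≤ b i

noncomputable def util {n m : ℕ} (q : Fin m → ℝ) (μ : Matching n m) (i : Fin n) : ℝ :=
  ∑ j ∈ assignedSet μ i, q j

noncomputable def welfare {n m : ℕ} (q : Fin m → ℝ) (μ : Matching n m) : ℝ :=
  ∑ i, util q μ i

/-- Task processing order: decreasing value, ties broken by smaller task index. -/
noncomputable def taskOrder {m : ℕ} (q : Fin m → ℝ) : List (Fin m) :=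
  (List.finRange m).mergeSort fun j k => decide (q k < q j ∨ (q j = q k ∧ j ≤ k))

noncomputable def apStep {n m : ℕ} (b : Fin n → ℕ) (E : Fin n → Finset (Fin m))
    (μ : Matching n m) (j : Fin m) : Matching n m :=
  match (List.finRange n).find? (fun i => decide (j ∈ E i ∧ load μ i < b i)) with
  | some i => Function.update μ j (some i)
  | none => μ

/-- The mechanism `M_AP`. -/
noncomputable def MAP {n m : ℕ} (b : Fin n → ℕ) (q : Fin m → ℝ)
    (E : Fin n → Finset (Fin m)) : Matching n m :=
  (taskOrder q).foldl (apStep b E) (fun _ => none)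

/-- The `min k |S|` highest-valued tasks of `S` (ties broken by smaller index). -/
noncomputable def topTasks {m : ℕ} (q : Fin m → ℝ) (S : Finset (Fin m)) (k : ℕ) :
    Finset (Fin m) :=
  (((taskOrder q).filter fun j => decide (j ∈ S)).take k).toFinset

noncomputable def remTasks {n m : ℕ} (b : Fin n → ℕ) (q : Fin m → ℝ)
    (E : Fin n → Finset (Fin m)) : ℕ → Finset (Fin m)
  | 0 => Finset.univ
  | i + 1 =>
    if h : i < n then
      remTasks b q E i \ topTasks q (E ⟨i, h⟩ ∩ remTasks b q E i) (b ⟨i, h⟩)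
    else remTasks b q E i

/-- Agent `i`'s FCFS policy / allocation `B_i`. -/
noncomputable def FCFS {n m : ℕ} (b : Fin n → ℕ) (q : Fin m → ℝ)
    (E : Fin n → Finset (Fin m)) (i : Fin n) : Finset (Fin m) :=
  topTasks q (E i ∩ remTasks b q E i.val) (b i)

/-! ### auxiliary lemmas -/

section Aux
variable {n m : ℕ} (b : Fin n → ℕ) (q : Fin m → ℝ) (E : Fin n → Finset (Fin m))

lemma taskOrder_perm : (taskOrder q).Perm (List.finRange m) :=
  List.mergeSort_perm _ _

lemma taskOrder_nodup : (taskOrder q).Nodup :=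
  (taskOrder_perm q).nodup_iff.mpr (List.nodup_finRange m)

lemma mem_taskOrder (j : Fin m) : j ∈ taskOrder q :=
  (taskOrder_perm q).mem_iff.mpr (List.mem_finRange j)

lemma taskOrder_sorted : (taskOrder q).Pairwise (fun j k => q k ≤ q j) := by
  have h := List.pairwise_mergeSort
      (le := fun j k : Fin m => decide (q k < q j ∨ (q j = q k ∧ j ≤ k)))
      (fun a b c hab hbc => by
        simp only [decide_eq_true_eq] at *
        rcases hab with h1 | ⟨h1, h1'⟩ <;> rcases hbc with h2 | ⟨h2, h2'⟩
        · exact Or.inl (h2.trans h1)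
        · exact Or.inl (h2 ▸ h1)
        · exact Or.inl (h1 ▸ h2)
        · exact Or.inr ⟨h1.trans h2, h1'.trans h2'⟩)
      (fun a b => by
        simp only [Bool.or_eq_true, decide_eq_true_eq]
        rcases lt_trichotomy (q a) (q b) with h | h | h
        · exact Or.inr (Or.inl h)
        · rcases le_total a b with h' | h'
          · exact Or.inl (Or.inr ⟨h, h'⟩)
          · exact Or.inr (Or.inr ⟨h.symm, h'⟩)
        · exact Or.inl (Or.inl h))
      (List.finRange m)
  refine h.imp ?_
  intro a b hab
  simp only [decide_eq_true_eq] at hab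
  rcases hab with h | ⟨h, _⟩
  · exact h.le
  · exact h.ge

lemma topTasks_subset (X : Finset (Fin m)) (k : ℕ) : topTasks q X k ⊆ X := by
  intro j hj
  simp only [topTasks, List.mem_toFinset] at hj
  have := (List.take_sublist _ _).mem hj
  simpa using (List.mem_filter.mp this).2

lemma topTasks_card_le (X : Finset (Fin m)) (k : ℕ) : (topTasks q X k).card ≤ k := by
  refine le_trans (List.toFinset_card_le _) ?_
  simpa using List.length_take_le _ _

lemma topTasks_before {X : Finset (Fin m)} {k : ℕ} {L R : List (Fin m)} {j : Fin m}
    (hl : taskOrder q = L ++ j :: R) (hjX : j ∈ X) (hj : j ∉ topTasks q X k) :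
    topTasks q X k ⊆ L.toFinset ∧ (topTasks q X k).card = k := by
  classical
  set p : Fin m → Bool := fun x => decide (x ∈ X) with hp
  have hfil : (taskOrder q).filter p = L.filter p ++ j :: R.filter p := by
    rw [hl, List.filter_append, List.filter_cons]
    simp [p, hjX]
  rcases le_or_gt k (L.filter p).length with hk | hk
  · have htake : ((taskOrder q).filter p).take k = (L.filter p).take k := by
      rw [hfil, List.take_append_of_le_length hk]
    constructor
    · intro x hx
      change x ∈ (((taskOrder q).filter p).take k).toFinset at hx
      simp only [List.mem_toFinset, htake] at hx
      have : x ∈ L.filter p := (List.take_sublist _ _).mem hx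
      exact List.mem_toFinset.mpr (List.mem_of_mem_filter this)
    · have hnd : (((taskOrder q).filter p).take k).Nodup :=
        ((List.take_sublist _ _).nodup ((taskOrder_nodup q).filter p))
      rw [topTasks, List.toFinset_card_of_nodup hnd, List.length_take]
      have : k ≤ ((taskOrder q).filter p).length := by
        rw [hfil, List.length_append]
        exact le_trans hk (Nat.le_add_right _ _)
      omega
  · exfalso
    apply hj
    change j ∈ (((taskOrder q).filter p).take k).toFinset
    simp only [List.mem_toFinset, hfil, List.take_append]
    refine List.mem_append_right _ ?_
    have : 0 < k - (L.filter p).length := by omega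
    rcases Nat.exists_eq_add_of_lt this with ⟨d, hd⟩
    rw [show k - (L.filter p).length = (d + 1) by omega]
    simp

lemma remTasks_succ_subset (k : ℕ) : remTasks b q E (k + 1) ⊆ remTasks b q E k := by
  rw [remTasks]
  split
  · exact Finset.sdiff_subset
  · exact subset_rfl

lemma remTasks_anti {k k' : ℕ} (h : k ≤ k') : remTasks b q E k' ⊆ remTasks b q E k := by
  induction k' with
  | zero => simp_all
  | succ k'' ih =>
    rcases Nat.eq_or_lt_of_le h with h' | h'
    · subst h'; exact subset_rfl
    · exact (remTasks_succ_subset b q E k'').trans (ih (by omega))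

lemma remTasks_succ_eq (i : Fin n) :
    remTasks b q E (i.val + 1) = remTasks b q E i.val \ FCFS b q E i := by
  rw [remTasks, dif_pos i.isLt, FCFS, Fin.eta]

lemma not_mem_remTasks {j : Fin m} {k : ℕ} (h : j ∉ remTasks b q E k) :
    ∃ k' : Fin n, k'.val < k ∧ j ∈ FCFS b q E k' := by
  induction k with
  | zero => simp [remTasks] at h
  | succ k'' ih =>
    by_cases hn : k'' < n
    · by_cases hjr : j ∈ remTasks b q E k''
      · refine ⟨⟨k'', hn⟩, by simp, ?_⟩
        have heq := remTasks_succ_eq b q E ⟨k'', hn⟩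
        simp only at heq
        rw [heq] at h
        simp only [Finset.mem_sdiff, not_and, not_not] at h
        exact h hjr
      · obtain ⟨k', hk', hj⟩ := ih hjr
        exact ⟨k', by omega, hj⟩
    · rw [remTasks, dif_neg hn] at h
      obtain ⟨k', hk', hj⟩ := ih h
      exact ⟨k', by omega, hj⟩

lemma FCFS_subset (i : Fin n) : FCFS b q E i ⊆ E i ∩ remTasks b q E i.val :=
  topTasks_subset q _ _

lemma FCFS_not_mem_of_lt {j : Fin m} {i i' : Fin n} (hlt : i < i')
    (h' : j ∈ FCFS b q E i') : j ∉ FCFS b q E i := by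
  have h1 : j ∈ remTasks b q E i'.val :=
    (Finset.mem_inter.mp (FCFS_subset b q E i' h')).2
  have h2 : j ∈ remTasks b q E (i.val + 1) :=
    remTasks_anti b q E (by exact hlt) h1
  rw [remTasks_succ_eq] at h2
  exact (Finset.mem_sdiff.mp h2).2

lemma FCFS_mem_unique {j : Fin m} {i i' : Fin n} (h : j ∈ FCFS b q E i)
    (h' : j ∈ FCFS b q E i') : i = i' := by
  by_contra hne
  rcases Ne.lt_or_gt hne with hlt | hlt
  · exact FCFS_not_mem_of_lt b q E hlt h' h
  · exact FCFS_not_mem_of_lt b q E hlt h h'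


/-- Invariant relating the partial run of `M_AP` on a prefix `L` of the task order
to the FCFS allocation. -/
def MAPInv {n m : ℕ} (b : Fin n → ℕ) (q : Fin m → ℝ) (E : Fin n → Finset (Fin m))
    (μ : Matching n m) (L : List (Fin m)) : Prop :=
  ∀ j i, μ j = some i ↔ j ∈ L ∧ j ∈ FCFS b q E i

lemma load_of_inv {μ : Matching n m} {L : List (Fin m)} (hμ : MAPInv b q E μ L)
    (k : Fin n) : load μ k = (FCFS b q E k ∩ L.toFinset).card := by
  classical
  unfold load
  congr 1
  ext j
  simp only [Finset.mem_filter, Finset.mem_univ, true_and, Finset.mem_inter,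
    List.mem_toFinset, hμ j k]
  tauto

lemma full_of_not_mem {μ : Matching n m} {L R : List (Fin m)} {j : Fin m}
    (hl : taskOrder q = L ++ j :: R) (hμ : MAPInv b q E μ L) {k : Fin n}
    (hjE : j ∈ E k) (hjr : j ∈ remTasks b q E k.val) (hjF : j ∉ FCFS b q E k) :
    load μ k = b k := by
  classical
  have hjX : j ∈ E k ∩ remTasks b q E k.val := Finset.mem_inter.mpr ⟨hjE, hjr⟩
  obtain ⟨hsub, hcard⟩ := topTasks_before q hl hjX hjF
  rw [load_of_inv b q E hμ k, FCFS, Finset.inter_eq_left.mpr hsub]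
  exact hcard

lemma inv_step {μ : Matching n m} {L R : List (Fin m)} {j : Fin m}
    (hl : taskOrder q = L ++ j :: R) (hμ : MAPInv b q E μ L) :
    MAPInv b q E (apStep b E μ j) (L ++ [j]) := by
  classical
  have hnd : (L ++ j :: R).Nodup := hl ▸ taskOrder_nodup q
  have hjL : j ∉ L := by
    intro hj
    exact (List.disjoint_of_nodup_append hnd) hj List.mem_cons_self
  set p : Fin n → Bool := fun i => decide (j ∈ E i ∧ load μ i < b i) with hp
  by_cases hex : ∃ i₀, j ∈ FCFS b q E i₀
  · obtain ⟨i₀, hi₀⟩ := hex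
    -- p i₀ is true
    have hpi₀ : p i₀ = true := by
      have hjE : j ∈ E i₀ := (Finset.mem_inter.mp (FCFS_subset b q E i₀ hi₀)).1
      have hload : load μ i₀ < b i₀ := by
        rw [load_of_inv b q E hμ i₀]
        have hsub : FCFS b q E i₀ ∩ L.toFinset ⊆ (FCFS b q E i₀).erase j := by
          intro x hx
          rcases Finset.mem_inter.mp hx with ⟨hx1, hx2⟩
          refine Finset.mem_erase.mpr ⟨?_, hx1⟩
          rintro rfl
          exact hjL (List.mem_toFinset.mp hx2)
        calc (FCFS b q E i₀ ∩ L.toFinset).card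
            ≤ ((FCFS b q E i₀).erase j).card := Finset.card_le_card hsub
          _ = (FCFS b q E i₀).card - 1 := Finset.card_erase_of_mem hi₀
          _ < (FCFS b q E i₀).card := by
              have : 0 < (FCFS b q E i₀).card := Finset.card_pos.mpr ⟨j, hi₀⟩
              omega
          _ ≤ b i₀ := topTasks_card_le q _ _
      simp [p, hjE, hload]
    -- p k is false for k < i₀
    have hpk : ∀ k : Fin n, k < i₀ → p k = false := by
      intro k hk
      by_cases hjE : j ∈ E k
      · have hjr' : j ∈ remTasks b q E i₀.val :=
          (Finset.mem_inter.mp (FCFS_subset b q E i₀ hi₀)).2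
        have hjr2 : j ∈ remTasks b q E (k.val + 1) :=
          remTasks_anti b q E (by exact hk) hjr'
        rw [remTasks_succ_eq] at hjr2
        rcases Finset.mem_sdiff.mp hjr2 with ⟨hjr, hjF⟩
        have := full_of_not_mem b q E hl hμ hjE hjr hjF
        simp [p, this]
      · simp [p, hjE]
    -- find? returns i₀
    have hfind : (List.finRange n).find? p = some i₀ := by
      have hsplit : List.finRange n =
          (List.finRange n).take i₀.val ++ i₀ :: (List.finRange n).drop (i₀.val + 1) := by
        conv_lhs => rw [← List.take_append_drop i₀.val (List.finRange n)]
        congr 1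
        rw [List.drop_eq_getElem_cons (by simp [i₀.isLt])]
        congr 1
        simp [List.getElem_finRange]
      rw [hsplit, List.find?_append]
      have h1 : ((List.finRange n).take i₀.val).find? p = none := by
        rw [List.find?_eq_none]
        intro x hx
        obtain ⟨ix, hix, hgx⟩ := List.mem_take_iff_getElem.mp hx
        have hxval : x.val = ix := by
          rw [← hgx]; simp [List.getElem_finRange]
        have hxlt : x < i₀ := by
          rw [Fin.lt_def, hxval]; exact lt_of_lt_of_le hix inf_le_left
        simp [hpk x hxlt]
      rw [h1]
      simp [List.find?_cons, hpi₀]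
    -- conclude
    have happ : apStep b E μ j = Function.update μ j (some i₀) := by
      rw [apStep, hfind]
    rw [happ]
    intro j' i
    by_cases hjj : j' = j
    · subst hjj
      simp only [Function.update_self, Option.some.injEq]
      constructor
      · rintro rfl
        exact ⟨by simp, hi₀⟩
      · rintro ⟨-, hji⟩
        exact (FCFS_mem_unique b q E hi₀ hji)
    · rw [Function.update_of_ne hjj]
      rw [hμ j' i]
      simp [hjj]
  · push_neg at hex
    have hfind : (List.finRange n).find? p = none := by
      rw [List.find?_eq_none]
      intro k _
      by_cases hjE : j ∈ E k
      · have hjr : j ∈ remTasks b q E k.val := by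
          by_contra hjr
          obtain ⟨k', -, hj'⟩ := not_mem_remTasks b q E hjr
          exact hex k' hj'
        have := full_of_not_mem b q E hl hμ hjE hjr (hex k)
        simp [p, this]
      · simp [p, hjE]
    have happ : apStep b E μ j = μ := by
      rw [apStep, hfind]
    rw [happ]
    intro j' i
    by_cases hjj : j' = j
    · subst hjj
      rw [hμ j' i]
      simp [hjL, hex i]
    · rw [hμ j' i]
      simp [hjj]

lemma inv_foldl : ∀ (L2 L1 : List (Fin m)) (μ : Matching n m),
    taskOrder q = L1 ++ L2 → MAPInv b q E μ L1 →
    MAPInv b q E (L2.foldl (apStep b E) μ) (taskOrder q) := by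
  intro L2
  induction L2 with
  | nil =>
    intro L1 μ hl hμ
    simpa [hl] using hμ
  | cons j R ih =>
    intro L1 μ hl hμ
    have step := inv_step b q E hl hμ
    have := ih (L1 ++ [j]) (apStep b E μ j) (by rw [hl]; simp) step
    simpa using this

lemma assignedSet_MAP (i : Fin n) : assignedSet (MAP b q E) i = FCFS b q E i := by
  classical
  have h0 : MAPInv b q E (fun _ => none) [] := by
    intro j i; simp
  have h := inv_foldl b q E (taskOrder q) [] (fun _ => none) (by simp) h0
  ext j
  simp only [assignedSet, Finset.mem_filter, Finset.mem_univ, true_and]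
  rw [MAP] at *
  rw [h j i]
  simp [mem_taskOrder q j]


lemma util_MAP (i : Fin n) : util q (MAP b q E) i = ∑ j ∈ FCFS b q E i, q j := by
  rw [util, assignedSet_MAP]

/-- `remTasks` at level `k` depends only on the reports of agents with index `< k`. -/
lemma remTasks_congr {b' : Fin n → ℕ} {E' : Fin n → Finset (Fin m)} (k : ℕ)
    (h : ∀ k' (hk' : k' < n), k' < k → E ⟨k', hk'⟩ = E' ⟨k', hk'⟩ ∧ b ⟨k', hk'⟩ = b' ⟨k', hk'⟩) :
    remTasks b q E k = remTasks b' q E' k := by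
  induction k with
  | zero => rfl
  | succ k'' ih =>
    have hih := ih (fun k' hk' hlt => h k' hk' (by omega))
    rw [remTasks, remTasks]
    split
    · rename_i hn
      obtain ⟨hE, hb⟩ := h k'' hn (by omega)
      rw [hih, hE, hb]
    · exact hih

end Aux

section Sums

lemma sum_le_of_sublist {l1 l2 : List ℝ} (h : l2.Sublist l1) (hn : ∀ x ∈ l1, 0 ≤ x) :
    l2.sum ≤ l1.sum := by
  induction h with
  | slnil => simp
  | cons a h ih =>
    rename_i l₁ l₂
    have := ih (fun x hx => hn x (List.mem_cons_of_mem a hx))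
    rw [List.sum_cons]
    have ha : 0 ≤ a := hn a List.mem_cons_self
    linarith
  | cons_cons a h ih =>
    rename_i l₁ l₂
    have := ih (fun x hx => hn x (List.mem_cons_of_mem a hx))
    simp only [List.sum_cons]
    linarith

lemma sum_take_le_of_sublist : ∀ {l1 l2 : List ℝ}, l2.Sublist l1 →
    l1.Pairwise (fun a b => b ≤ a) → (∀ x ∈ l1, 0 ≤ x) →
    ∀ k, (l2.take k).sum ≤ (l1.take k).sum := by
  intro l1 l2 h
  induction h with
  | slnil => simp
  | cons a h ih =>
    rename_i l₂ l₁
    intro hs hn k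
    have hs' := List.pairwise_cons.mp hs
    have hn' : ∀ x ∈ l₁, 0 ≤ x := fun x hx => hn x (List.mem_cons_of_mem a hx)
    cases k with
    | zero => simp
    | succ k' =>
      rw [List.take_succ_cons, List.sum_cons]
      refine le_trans (ih hs'.2 hn' (k' + 1)) ?_
      rcases lt_or_ge k' l₁.length with hk | hk
      · rw [List.sum_take_succ _ _ hk]
        have : l₁[k'] ≤ a := hs'.1 _ (l₁.getElem_mem hk)
        linarith
      · rw [List.take_of_length_le hk, List.take_of_length_le (by omega)]
        have ha : 0 ≤ a := hn a List.mem_cons_self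
        linarith
  | cons_cons a h ih =>
    rename_i l₂ l₁
    intro hs hn k
    have hs' := List.pairwise_cons.mp hs
    have hn' : ∀ x ∈ l₁, 0 ≤ x := fun x hx => hn x (List.mem_cons_of_mem a hx)
    cases k with
    | zero => simp
    | succ k' =>
      simp only [List.take_succ_cons, List.sum_cons]
      have := ih hs'.2 hn' k'
      linarith


lemma sum_topTasks_le {m : ℕ} (q : Fin m → ℝ) (hq : ∀ j, 0 < q j)
    {X Y : Finset (Fin m)} (hXY : X ⊆ Y) {c k : ℕ} (hck : c ≤ k) :
    ∑ j ∈ topTasks q X c, q j ≤ ∑ j ∈ topTasks q Y k, q j := by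
  classical
  set f1 := (taskOrder q).filter (fun j => decide (j ∈ X)) with hf1
  set f2 := (taskOrder q).filter (fun j => decide (j ∈ Y)) with hf2
  have hsub : f1.Sublist f2 := by
    refine List.monotone_filter_right _ (fun a ha => ?_)
    simp only [decide_eq_true_eq] at *
    exact hXY ha
  have hnd1 : (f1.take c).Nodup :=
    (List.take_sublist _ _).nodup ((taskOrder_nodup q).filter _)
  have hnd2 : (f2.take k).Nodup :=
    (List.take_sublist _ _).nodup ((taskOrder_nodup q).filter _)
  rw [topTasks, topTasks, List.sum_toFinset _ hnd1, List.sum_toFinset _ hnd2,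
    List.map_take, List.map_take]
  have hsorted : (f2.map q).Pairwise (fun a b => b ≤ a) := by
    rw [List.pairwise_map]
    exact List.Pairwise.sublist List.filter_sublist (taskOrder_sorted q)
  have hnonneg : ∀ x ∈ f2.map q, (0:ℝ) ≤ x := by
    intro x hx
    obtain ⟨j, -, rfl⟩ := List.mem_map.mp hx
    exact (hq j).le
  calc ((f1.map q).take c).sum ≤ ((f2.map q).take c).sum :=
        sum_take_le_of_sublist (hsub.map q) hsorted hnonneg c
    _ ≤ ((f2.map q).take k).sum := by
        apply sum_le_of_sublist
        · have h1 : (f2.map q).take c = ((f2.map q).take k).take c := by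
            rw [List.take_take, min_eq_left hck]
          rw [h1]
          exact List.take_sublist _ _
        · intro x hx
          exact hnonneg x ((List.take_sublist _ _).mem hx)

end Sums

/-- In the Edge and Capacity Manipulation Setting, `M_AP` is truthful: with all other
agents' reports fixed, agent `a_i` cannot gain by reporting a nonempty subset `S` of
its true edge set `T i` together with a capacity `c` with `1 ≤ c ≤ b i`, compared to
reporting `(T i, b i)`. -/
theorem MAP_ECMS_truthful (n m : ℕ) (b : Fin n → ℕ) (q : Fin m → ℝ)
    (hb : ∀ i, 1 ≤ b i) (hq : ∀ j, 0 < q j)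
    (T : Fin n → Finset (Fin m))
    (RE : Fin n → Finset (Fin m)) (Rc : Fin n → ℕ)
    (i : Fin n) (S : Finset (Fin m)) (c : ℕ)
    (hS : S.Nonempty) (hsub : S ⊆ T i) (hc1 : 1 ≤ c) (hc2 : c ≤ b i) :
    util q (MAP (Function.update Rc i c) q (Function.update RE i S)) i ≤
      util q (MAP (Function.update Rc i (b i)) q (Function.update RE i (T i))) i := by
  classical
  rw [util_MAP, util_MAP, FCFS, FCFS]
  have hR : remTasks (Function.update Rc i c) q (Function.update RE i S) i.val =
      remTasks (Function.update Rc i (b i)) q (Function.update RE i (T i)) i.val := by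
    refine remTasks_congr _ q _ i.val (fun k' hk' hlt => ?_)
    have hne : (⟨k', hk'⟩ : Fin n) ≠ i := by
      intro h
      rw [Fin.ext_iff] at h
      simp only at h
      omega
    rw [Function.update_of_ne hne, Function.update_of_ne hne,
      Function.update_of_ne hne, Function.update_of_ne hne]
    exact ⟨rfl, rfl⟩
  simp only [Function.update_self]
  rw [hR]
  exact sum_topTasks_le q hq (Finset.inter_subset_inter hsub subset_rfl) hc2
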